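/- Let c = (c_1,…,c_n) be a binary string, let 1 ≤ p ≤ n be a position with c_p = 1, and let c′ be the string of length n−1 obtained from c by deleting the bit at position p. Let R_1 be the number of indices i > p with c_i = 1 and let L_0 be the number of indices i < p with c_i = 0. Then checksum(c) − checksum(c′) = p + R_1 = 1 + ω + L_0, where ω is the weight of c′; in particular this difference is strictly greater than ω. -/

import Mathlib

/-!
Write `c = A ++ 1 :: B` with `|A| = p - 1`. Removing the `1` lowers the checksum by its own
index `p`, and every `1` of `B` moves one place to the left, losing a further `B.count true`.
Since `|A| = A.count true + A.count false`, the loss `p + B.count true` also equals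
`1 + (A ++ B).count true + A.count false`.
-/

/-- The checksum of a binary string `c = (c_1, …, c_n)` is `Σ_{i=1}^n i·c_i`
(1-indexed). -/
def checksum (c : List Bool) : ℕ :=
  ∑ i ∈ Finset.range c.length, (i + 1) * (c.getD i false).toNat

theorem List.lt_length_of_getD_ne {α : Type*} {l : List α} {i : ℕ} {d : α}
    (h : l.getD i d ≠ d) : i < l.length := by
  by_contra! hi
  exact h (List.getD_eq_default l d hi)

theorem List.eq_take_append_cons_drop_of_getD {α : Type*} {l : List α} {i : ℕ} {d a : α}
    (h : l.getD i d = a) (ha : a ≠ d) : l = l.take i ++ a :: l.drop (i + 1) := by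
  have hi : i < l.length := List.lt_length_of_getD_ne (h ▸ ha)
  rw [← h, List.getD_eq_getElem _ _ hi, List.cons_getElem_drop_succ, List.take_append_drop]

theorem List.sum_range_getD_toNat (l : List Bool) :
    ∑ i ∈ Finset.range l.length, (l.getD i false).toNat = l.count true := by
  induction l with
  | nil => simp
  | cons b l ih =>
    rw [List.length_cons, Finset.sum_range_succ']
    simp only [List.getD_cons_succ, List.getD_cons_zero, ih, List.count_cons]
    cases b <;> simp

theorem checksum_cons (b : Bool) (l : List Bool) :
    checksum (b :: l) = checksum l + l.count true + b.toNat := by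
  rw [checksum, List.length_cons, Finset.sum_range_succ']
  have hshift : ∀ i, (i + 1 + 1) * (l.getD i false).toNat
      = (i + 1) * (l.getD i false).toNat + (l.getD i false).toNat := fun i => by ring
  simp only [List.getD_cons_succ, List.getD_cons_zero, hshift, Finset.sum_add_distrib,
    List.sum_range_getD_toNat, zero_add, one_mul]
  rfl

theorem checksum_append_cons (A B : List Bool) (b : Bool) :
    checksum (A ++ b :: B) = checksum (A ++ B) + (A.length + 1) * b.toNat + B.count true := by
  induction A with
  | nil => simp only [List.nil_append, checksum_cons, List.length_nil]; ring
  | cons a A ih =>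
    simp only [List.cons_append, checksum_cons, ih, List.count_append, List.count_cons,
      List.length_cons]
    cases b <;> simp <;> ring

theorem checksum_delete_one_general (c : List Bool) (p : ℕ)
    (hp1 : 1 ≤ p)
    (hcp : c.getD (p - 1) false = true) :
    checksum c
        = checksum (c.take (p - 1) ++ c.drop p) + (p + (c.drop p).count true) ∧
    p + (c.drop p).count true
        = 1 + (c.take (p - 1) ++ c.drop p).count true
            + (c.take (p - 1)).count false ∧
    (c.take (p - 1) ++ c.drop p).count true < p + (c.drop p).count true := by
  have hc := List.eq_take_append_cons_drop_of_getD hcp Bool.true_eq_false.mp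
  have hlen : p - 1 < c.length := List.lt_length_of_getD_ne (d := false) (by rw [hcp]; decide)
  rw [Nat.sub_add_cancel hp1] at hc
  set A := c.take (p - 1)
  set B := c.drop p
  have hA : A.count true + A.count false = p - 1 := by
    rw [List.count_true_add_count_false, List.length_take_of_le hlen.le]
  have hdelete : checksum c = checksum (A ++ B) + (p + B.count true) := by
    rw [hc, checksum_append_cons, List.length_take_of_le hlen.le]
    simp only [Bool.toNat_true, mul_one]
    omega
  have hloss : p + B.count true = 1 + (A ++ B).count true + A.count false := by
    rw [List.count_append]
    omega
  exact ⟨hdelete, hloss, by omega⟩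

/-- Deleting a `1` at (1-indexed) position `p` of `c` decreases the checksum by
`p + R₁`, where `R₁` is the number of 1's strictly to the right of position `p`.
Moreover `p + R₁ = 1 + ω + L₀` where `ω` is the weight of the resulting string
`c' = c.take (p-1) ++ c.drop p` and `L₀` is the number of 0's strictly to the
left of position `p`; in particular the checksum deficiency exceeds `ω`. -/
theorem checksum_delete_one (c : List Bool) (p : ℕ)
    (hp1 : 1 ≤ p) (hpn : p ≤ c.length)
    (hcp : c.getD (p - 1) false = true) :
    checksum c
        = checksum (c.take (p - 1) ++ c.drop p) + (p + (c.drop p).count true) ∧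
    p + (c.drop p).count true
        = 1 + (c.take (p - 1) ++ c.drop p).count true
            + (c.take (p - 1)).count false ∧
    (c.take (p - 1) ++ c.drop p).count true < p + (c.drop p).count true :=
  checksum_delete_one_general c p hp1 hcp
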